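/- Let κ be a regular cardinal, X ⊆ Y ⊆ Z infinite sets, and l = (Fm_Σ(X), ⊢) a logic of cardinality κ. For an infinite set W ⊇ X, define the relation ⊢^{+,W} on Fm_Σ(W) by Γ ⊢^{+,W} φ iff σ[Γ] ⊢ σ(φ) for every Σ-homomorphism σ : Fm_Σ(W) → Fm_Σ(X), and let ⊢^{+,W}_κ be its κ-ary part. Then for all Γ ∪ {φ} ⊆ Fm_Σ(Y) (regarded inside Fm_Σ(Z)): Γ ⊢^{+,Y}_κ φ if and only if Γ ⊢^{+,Z}_κ φ. That is, the restriction to Fm_Σ(Y) of the maximal natural extension of l to Fm_Σ(Z) is the maximal natural extension of l to Fm_Σ(Y). -/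

import Mathlib

/-!
Substitutions `Fm_Σ(Z) → Fm_Σ(X)` restrict along `Y ↪ Z` to substitutions on `Y`, and, as `X`
is nonempty, every substitution on `Y` extends to one on `Z`; hence `⊢^{+,Z}` restricted to
`Fm_Σ(Y)` is exactly `⊢^{+,Y}`. Taking κ-ary parts commutes with this restriction, because a
subset of the image of `Γ` of size `< κ` is the image of a subset of `Γ` of the same size.
-/

universe u v w

open FirstOrder FirstOrder.Language

/-- A relation between subsets and elements of `A` is `μ`-ary. -/
def KAry {A : Type*} (μ : Cardinal) (r : Set A → A → Prop) : Prop :=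
  ∀ (Γ : Set A) (φ : A), r Γ φ → ∃ Γ' ⊆ Γ, Cardinal.mk ↥Γ' < μ ∧ r Γ' φ

/-- The κ-ary part of a relation. -/
def kAryPart {A : Type*} (κ : Cardinal) (r : Set A → A → Prop) :
    Set A → A → Prop :=
  fun Γ φ => ∃ Γ' ⊆ Γ, Cardinal.mk ↥Γ' < κ ∧ r Γ' φ

/-- `r` is a logic on `Fm_Σ(W)`: reflexive, monotone, satisfying cut, structural. -/
def IsLogicOn {L : FirstOrder.Language} {W : Type*}
    (r : Set (L.Term W) → L.Term W → Prop) : Prop :=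
  (∀ (Γ : Set (L.Term W)) (φ : L.Term W), φ ∈ Γ → r Γ φ) ∧
  (∀ (Γ Δ : Set (L.Term W)) (φ : L.Term W), Γ ⊆ Δ → r Γ φ → r Δ φ) ∧
  (∀ (Γ Δ : Set (L.Term W)) (φ : L.Term W), r Γ φ → (∀ ψ ∈ Γ, r Δ ψ) → r Δ φ) ∧
  (∀ (σ : W → L.Term W) (Γ : Set (L.Term W)) (φ : L.Term W),
      r Γ φ → r ((fun t : L.Term W => t.subst σ) '' Γ) (φ.subst σ))

/-- The relation `⊢^{+,W}` on `Fm_Σ(W)`: `Γ ⊢^{+,W} φ` iff `σ[Γ] ⊢ σ(φ)` for every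
Σ-homomorphism `σ : Fm_Σ(W) → Fm_Σ(X)`. -/
def PlusRel {L : FirstOrder.Language} {X W : Type*}
    (r : Set (L.Term X) → L.Term X → Prop)
    (Γ : Set (L.Term W)) (φ : L.Term W) : Prop :=
  ∀ σ : W → L.Term X, r ((fun t : L.Term W => t.subst σ) '' Γ) (φ.subst σ)

namespace FirstOrder.Language.Term

variable {L : Language} {α β γ : Type*}

theorem subst_relabel (f : α → β) (σ : β → L.Term γ) (t : L.Term α) :
    (t.relabel f).subst σ = t.subst (σ ∘ f) := by
  induction t with
  | var => rfl
  | func g ts ih => simp only [relabel, subst, ih]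

theorem subst_var (t : L.Term α) : t.subst var = t := by
  induction t with
  | var => rfl
  | func g ts ih => simp only [subst, ih]

theorem relabel_injective {f : α → β} (hf : Function.Injective f) :
    Function.Injective (relabel (L := L) f) := by
  intro t s hts
  -- `t` itself serves as the default value, so no element of `α` is needed.
  let σ : β → L.Term α := Function.extend f var fun _ => t
  have hσ : σ ∘ f = var := Function.extend_comp hf _ _
  simpa only [subst_relabel, hσ, subst_var] using congrArg (subst · σ) hts

end FirstOrder.Language.Term

theorem kAryPart_image_iff {A B : Type u} {κ : Cardinal} {g : A → B}
    (hg : Function.Injective g)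
    {R : Set A → A → Prop} {S : Set B → B → Prop}
    (hSR : ∀ Δ ψ, S (g '' Δ) (g ψ) ↔ R Δ ψ) (Γ : Set A) (φ : A) :
    kAryPart κ S (g '' Γ) (g φ) ↔ kAryPart κ R Γ φ := by
  constructor
  · rintro ⟨Δ, hΔ, hcard, hS⟩
    have hpre : g '' (g ⁻¹' Δ) = Δ :=
      Set.image_preimage_eq_of_subset (hΔ.trans (Set.image_subset_range g Γ))
    refine ⟨g ⁻¹' Δ, ?_, (Cardinal.mk_preimage_of_injective g Δ hg).trans_lt hcard, ?_⟩
    · simpa only [Set.preimage_image_eq Γ hg] using Set.preimage_mono (f := g) hΔ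
    · rwa [← hSR, hpre]
  · rintro ⟨Γ', hΓ', hcard, hR⟩
    exact ⟨g '' Γ', Set.image_mono hΓ', Cardinal.mk_image_le.trans_lt hcard, (hSR Γ' φ).2 hR⟩

theorem plusRel_relabel_iff {L : Language} {X Y Z : Type*} [Nonempty X] {f : Y → Z}
    (hf : Function.Injective f) (r : Set (L.Term X) → L.Term X → Prop)
    (Γ : Set (L.Term Y)) (φ : L.Term Y) :
    PlusRel r (Term.relabel f '' Γ) (Term.relabel f φ) ↔ PlusRel r Γ φ := by
  have hsubst : ∀ σ : Z → L.Term X,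
      (fun t : L.Term Z => t.subst σ) '' (Term.relabel f '' Γ) =
        (fun t : L.Term Y => t.subst (σ ∘ f)) '' Γ := fun σ => by
    rw [Set.image_image]
    exact Set.image_congr fun t _ => Term.subst_relabel f σ t
  constructor
  · intro h σ
    let τ := Function.extend f σ fun _ => Term.var (Classical.arbitrary X)
    have hτ : τ ∘ f = σ := Function.extend_comp hf _ _
    simpa only [hsubst, Term.subst_relabel, hτ] using h τ
  · intro h σ
    simpa only [hsubst, Term.subst_relabel] using h (σ ∘ f)

theorem stmt_18_general {L : FirstOrder.Language.{u, v}} {X Y Z : Type w}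
    [Infinite X]
    (em₂ : Y → Z) (hem₂ : Function.Injective em₂)
    (κ : Cardinal.{max u w})
    (r : Set (L.Term X) → L.Term X → Prop) :
    ∀ (Γ : Set (L.Term Y)) (φ : L.Term Y),
      kAryPart κ (PlusRel (X := X) r) Γ φ ↔
      kAryPart κ (PlusRel (X := X) r)
        (Term.relabel em₂ '' Γ) (Term.relabel em₂ φ) := fun Γ φ =>
  (kAryPart_image_iff (Term.relabel_injective hem₂) (plusRel_relabel_iff hem₂ r) Γ φ).symm

/-- for `X ⊆ Y ⊆ Z` and a logic `l` on `Fm_Σ(X)` of regular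
cardinality κ, the restriction to `Fm_Σ(Y)` of the maximal natural extension
`⊢^{+,Z}_κ` of `l` to `Fm_Σ(Z)` is the maximal natural extension `⊢^{+,Y}_κ`:
for all `Γ ∪ {φ} ⊆ Fm_Σ(Y)`, `Γ ⊢^{+,Y}_κ φ` iff `Γ ⊢^{+,Z}_κ φ`. -/
theorem stmt_18 {L : FirstOrder.Language.{u, v}} {X Y Z : Type w}
    [Infinite X] [Infinite Y] [Infinite Z]
    (em₁ : X → Y) (hem₁ : Function.Injective em₁)
    (em₂ : Y → Z) (hem₂ : Function.Injective em₂)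
    (κ : Cardinal.{max u w}) (hκ : κ.IsRegular)
    (r : Set (L.Term X) → L.Term X → Prop) (hlogic : IsLogicOn r)
    (hκary : KAry κ r)
    (hleast : ∀ μ : Cardinal.{max u w}, Cardinal.aleph0 ≤ μ → KAry μ r → κ ≤ μ) :
    ∀ (Γ : Set (L.Term Y)) (φ : L.Term Y),
      kAryPart κ (PlusRel (X := X) r) Γ φ ↔
      kAryPart κ (PlusRel (X := X) r)
        (Term.relabel em₂ '' Γ) (Term.relabel em₂ φ) :=
  stmt_18_general em₂ hem₂ κ r
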